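/- Let Q = [0,l]^d ⊂ R^d and let Q' ⊆ Q be a measurable subset with measure |Q'| ≥ (p/2)·l^d for some p ∈ (0,1]. Then there exists a constant C = C(l,p,d) such that for every u ∈ H^1(Q): ∫_Q |u|² dx ≤ C(∫_{Q'} |u|² dx + ∫_Q |∇u|² dx). -/

import Mathlib

open MeasureTheory Real Set
lemma cs01 {h : ℝ → ℝ} (hc : Continuous h) :
    (∫ t in (0:ℝ)..1, h t) ^ 2 ≤ ∫ t in (0:ℝ)..1, (h t) ^ 2 := by
  set c := ∫ t in (0:ℝ)..1, h t with hcdef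
  have h0 : (0:ℝ) ≤ ∫ t in (0:ℝ)..1, (h t - c)^2 :=
    intervalIntegral.integral_nonneg (by norm_num) (fun t _ => sq_nonneg _)
  have hexp : ∫ t in (0:ℝ)..1, (h t - c)^2 = (∫ t in (0:ℝ)..1, (h t)^2) - c^2 := by
    have e : ∀ t, (h t - c)^2 = (h t)^2 - (2*c) * h t + c^2 := fun t => by ring
    simp_rw [e]
    rw [intervalIntegral.integral_add (f := fun t => h t ^ 2 - 2 * c * h t) (g := fun _ => c ^ 2) (((hc.pow 2).sub ((continuous_const.mul hc))).intervalIntegrable 0 1)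
      (continuous_const.intervalIntegrable 0 1),
      intervalIntegral.integral_sub (f := fun t => h t ^ 2) (g := fun t => 2 * c * h t) ((hc.pow 2).intervalIntegrable 0 1)
      ((continuous_const.mul hc).intervalIntegrable 0 1),
      intervalIntegral.integral_const_mul, intervalIntegral.integral_const, ← hcdef]
    simp [smul_eq_mul]
    ring
  nlinarith [h0, hexp]

lemma ftc_sq {d : ℕ} (u : EuclideanSpace ℝ (Fin d) → ℝ) (hu : ContDiff ℝ 1 u)
    (x y : EuclideanSpace ℝ (Fin d)) :
    (u x - u y)^2 ≤ ‖x - y‖^2 * ∫ t in (0:ℝ)..1, ‖fderiv ℝ u ((1-t) • y + t • x)‖^2 := by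
  have hpt : ∀ t : ℝ, (1-t) • y + t • x = y + t • (x - y) := fun t => by module
  simp_rw [hpt]
  set ψ : ℝ → EuclideanSpace ℝ (Fin d) := fun t => y + t • (x - y) with hψ
  have hψc : Continuous ψ := by continuity
  have hfc : Continuous (fun z => fderiv ℝ u z) := hu.continuous_fderiv one_ne_zero
  have hderiv : ∀ t : ℝ, HasDerivAt (fun s => u (ψ s)) ((fderiv ℝ u (ψ t)) (x - y)) t := by
    intro t
    have h1 : HasDerivAt ψ (x - y) t := by
      have h2 : HasDerivAt (fun s : ℝ => s • (x - y)) (x - y) t := by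
        simpa using (hasDerivAt_id t).smul_const (x - y)
      simpa [hψ] using h2.const_add y
    exact (((hu.differentiable one_ne_zero) (ψ t)).hasFDerivAt).comp_hasDerivAt t h1
  have hφ'c : Continuous fun t => (fderiv ℝ u (ψ t)) (x - y) :=
    (hfc.comp hψc).clm_apply continuous_const
  have heq : ∫ t in (0:ℝ)..1, (fderiv ℝ u (ψ t)) (x - y) = u (ψ 1) - u (ψ 0) :=
    intervalIntegral.integral_eq_sub_of_hasDerivAt (fun t _ => hderiv t)
      (hφ'c.intervalIntegrable 0 1)
  have hψ1 : ψ 1 = x := by simp [hψ]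
  have hψ0 : ψ 0 = y := by simp [hψ]
  have hnc : Continuous fun t => ‖fderiv ℝ u (ψ t)‖ * ‖x - y‖ :=
    (hfc.comp hψc).norm.mul continuous_const
  have heq' : u x - u y = ∫ t in (0:ℝ)..1, (fderiv ℝ u (ψ t)) (x - y) := by
    rw [heq, hψ1, hψ0]
  have habs : |u x - u y| ≤ ∫ t in (0:ℝ)..1, ‖fderiv ℝ u (ψ t)‖ * ‖x - y‖ := by
    rw [heq']
    calc |∫ t in (0:ℝ)..1, (fderiv ℝ u (ψ t)) (x - y)|
        ≤ ∫ t in (0:ℝ)..1, |(fderiv ℝ u (ψ t)) (x - y)| := by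
          simpa [Real.norm_eq_abs] using
            intervalIntegral.norm_integral_le_integral_norm (μ := volume)
              (f := fun t => (fderiv ℝ u (ψ t)) (x - y)) (by norm_num : (0:ℝ) ≤ 1)
      _ ≤ _ := intervalIntegral.integral_mono_on (by norm_num)
            (hφ'c.abs.intervalIntegrable 0 1) (hnc.intervalIntegrable 0 1)
            (fun t _ => (fderiv ℝ u (ψ t)).le_opNorm (x - y))
  have h1 : (u x - u y)^2 ≤ (∫ t in (0:ℝ)..1, ‖fderiv ℝ u (ψ t)‖ * ‖x - y‖)^2 := by
    rw [← sq_abs]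
    exact pow_le_pow_left₀ (abs_nonneg _) habs 2
  have h2 := cs01 hnc
  have h3 : ∫ t in (0:ℝ)..1, (‖fderiv ℝ u (ψ t)‖ * ‖x - y‖)^2
      = ‖x - y‖^2 * ∫ t in (0:ℝ)..1, ‖fderiv ℝ u (ψ t)‖^2 := by
    rw [← intervalIntegral.integral_const_mul]
    congr 1; ext t; ring
  calc (u x - u y)^2 ≤ _ := h1
    _ ≤ _ := h2
    _ = _ := h3
lemma scale_bound {d : ℕ} (v : EuclideanSpace ℝ (Fin d) → ℝ) (hv : Continuous v)
    (h0 : ∀ z, 0 ≤ v z) {K : Set (EuclideanSpace ℝ (Fin d))}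
    (hK : IsCompact K) (hKc : Convex ℝ K) (hKm : MeasurableSet K)
    {c : EuclideanSpace ℝ (Fin d)} (hc : c ∈ K) {s : ℝ} (hs : 1/2 ≤ s) (hs1 : s ≤ 1) :
    ∫ y in K, v (s • y + (1-s) • c) ≤ 2^d * ∫ y in K, v y := by
  have hs0 : (0:ℝ) < s := by linarith
  set a : EuclideanSpace ℝ (Fin d) → EuclideanSpace ℝ (Fin d) :=
    fun y => s • y + (1-s) • c with ha
  set b : EuclideanSpace ℝ (Fin d) → EuclideanSpace ℝ (Fin d) :=
    fun z => s⁻¹ • (z - (1-s) • c) with hb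
  have hab : ∀ z, a (b z) = z := by
    intro z
    simp only [ha, hb, smul_smul, mul_inv_cancel₀ hs0.ne', one_smul]
    abel
  have hba : ∀ z, b (a z) = z := by
    intro z
    simp only [ha, hb, add_sub_cancel_right, smul_smul, inv_mul_cancel₀ hs0.ne', one_smul]
  have hacont : Continuous a := (continuous_const_smul s).add continuous_const
  have hbcont : Continuous b := (continuous_id.sub continuous_const).const_smul s⁻¹
  have hpre : a ⁻¹' K = b '' K := by
    ext z; constructor
    · intro hz; exact ⟨a z, hz, hba z⟩
    · rintro ⟨w, hw, rfl⟩
      simpa [mem_preimage, hab w] using hw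
  have hpreK : IsCompact (a ⁻¹' K) := hpre ▸ hK.image hbcont
  have hmeasp : MeasurableSet (a ⁻¹' K) := hpreK.isClosed.measurableSet
  have hsubset : K ⊆ a ⁻¹' K := by
    intro y hy
    have : a y ∈ K := hKc hy hc hs0.le (by linarith) (by ring)
    exact this
  have hmono : ∫ y in K, v (a y) ≤ ∫ y in a ⁻¹' K, v (a y) := by
    apply setIntegral_mono_set
    · exact ((hv.comp hacont).continuousOn).integrableOn_compact hpreK
    · exact Filter.Eventually.of_forall (fun y => h0 _)
    · exact Filter.Eventually.of_forall hsubset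
  have heq : ∫ y in a ⁻¹' K, v (a y) = (s ^ d)⁻¹ * ∫ y in K, v y := by
    rw [← integral_indicator hmeasp, ← integral_indicator hKm]
    have e1 : ∀ y, (a ⁻¹' K).indicator (fun y => v (a y)) y = K.indicator v (a y) := by
      intro y
      by_cases h : a y ∈ K <;> simp [indicator, mem_preimage, h]
    simp_rw [e1]
    have e2 : (fun y => K.indicator v (a y))
        = fun y => (fun z => K.indicator v (z + (1-s) • c)) (s • y) := rfl
    rw [e2, MeasureTheory.Measure.integral_comp_smul_of_nonneg volume
      (fun z => K.indicator v (z + (1-s) • c)) s (hR := hs0.le)]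
    rw [integral_add_right_eq_self]
    simp [finrank_euclideanSpace_fin, smul_eq_mul]
  have hfin : (s ^ d)⁻¹ ≤ 2^d := by
    have h1 : ((1:ℝ)/2)^d ≤ s^d := pow_le_pow_left₀ (by norm_num) hs d
    have h2 : (0:ℝ) < ((1:ℝ)/2)^d := by positivity
    calc (s ^ d)⁻¹ ≤ (((1:ℝ)/2)^d)⁻¹ := by
          apply inv_anti₀ h2 h1
      _ = 2^d := by rw [one_div, inv_pow, inv_inv]
  have hnn : 0 ≤ ∫ y in K, v y := setIntegral_nonneg hKm (fun y _ => h0 y)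
  calc ∫ y in K, v (s • y + (1-s) • c) = ∫ y in K, v (a y) := rfl
    _ ≤ ∫ y in a ⁻¹' K, v (a y) := hmono
    _ = (s ^ d)⁻¹ * ∫ y in K, v y := heq
    _ ≤ 2^d * ∫ y in K, v y := mul_le_mul_of_nonneg_right hfin hnn
variable {d : ℕ} {l : ℝ}

lemma cube_closed (l : ℝ) :
    IsClosed {x : EuclideanSpace ℝ (Fin d) | ∀ i, x i ∈ Icc (0:ℝ) l} := by
  have : {x : EuclideanSpace ℝ (Fin d) | ∀ i, x i ∈ Icc (0:ℝ) l}
      = ⋂ i, (fun x : EuclideanSpace ℝ (Fin d) => x i) ⁻¹' Icc (0:ℝ) l := by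
    ext x; simp
  rw [this]
  exact isClosed_iInter fun i => isClosed_Icc.preimage ((continuous_apply i).comp (PiLp.continuous_ofLp 2 _))

lemma cube_compact (hl : 0 ≤ l) :
    IsCompact {x : EuclideanSpace ℝ (Fin d) | ∀ i, x i ∈ Icc (0:ℝ) l} := by
  apply Metric.isCompact_of_isClosed_isBounded (cube_closed l)
  rw [Metric.isBounded_iff_subset_closedBall 0]
  refine ⟨Real.sqrt (d * l^2), fun x hx => ?_⟩
  simp only [Metric.mem_closedBall, dist_zero_right]
  rw [EuclideanSpace.norm_eq]
  apply Real.sqrt_le_sqrt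
  calc ∑ i, ‖x i‖^2 ≤ ∑ _i : Fin d, l^2 := by
        apply Finset.sum_le_sum
        intro i _
        rw [Real.norm_eq_abs, sq_abs]
        have h1 := (hx i).1; have h2 := (hx i).2
        nlinarith
    _ = d * l^2 := by simp [Finset.sum_const, Finset.card_univ, nsmul_eq_mul]

lemma cube_convex :
    Convex ℝ {x : EuclideanSpace ℝ (Fin d) | ∀ i, x i ∈ Icc (0:ℝ) l} := by
  intro x hx y hy a b ha hb hab
  intro i
  have hxi := hx i; have hyi := hy i
  simp only [mem_Icc] at hxi hyi ⊢
  have e : (a • x + b • y) i = a * x i + b * y i := rfl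
  rw [e]
  constructor
  · exact add_nonneg (mul_nonneg ha hxi.1) (mul_nonneg hb hyi.1)
  · nlinarith [hxi.2, hyi.2, hxi.1, hyi.1]

lemma cube_volume (hl : 0 ≤ l) :
    volume {x : EuclideanSpace ℝ (Fin d) | ∀ i, x i ∈ Icc (0:ℝ) l}
      = ENNReal.ofReal (l ^ d) := by
  have hmp := EuclideanSpace.volume_preserving_symm_measurableEquiv_toLp (Fin d)
  have hset : {x : EuclideanSpace ℝ (Fin d) | ∀ i, x i ∈ Icc (0:ℝ) l}
      = (MeasurableEquiv.toLp 2 (Fin d → ℝ)).symm ⁻¹' (Set.pi univ fun _ : Fin d => Icc (0:ℝ) l) := by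
    ext x
    simp only [mem_setOf_eq, mem_preimage, Set.mem_pi, mem_univ, true_implies]
    exact Iff.rfl
  rw [hset, MeasurePreserving.measure_preimage hmp
    (MeasurableSet.univ_pi fun _ => measurableSet_Icc).nullMeasurableSet]
  rw [volume_pi_pi]
  simp [Real.volume_Icc, ← ENNReal.ofReal_pow hl]

lemma cube_dist (hl : 0 ≤ l) {x y : EuclideanSpace ℝ (Fin d)}
    (hx : x ∈ {x : EuclideanSpace ℝ (Fin d) | ∀ i, x i ∈ Icc (0:ℝ) l})
    (hy : y ∈ {x : EuclideanSpace ℝ (Fin d) | ∀ i, x i ∈ Icc (0:ℝ) l}) :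
    ‖x - y‖^2 ≤ d * l^2 := by
  rw [EuclideanSpace.norm_eq, sq_sqrt (by positivity)]
  calc ∑ i, ‖(x - y) i‖^2 ≤ ∑ _i : Fin d, l^2 := by
        apply Finset.sum_le_sum
        intro i _
        have e : (x - y) i = x i - y i := rfl
        rw [e, Real.norm_eq_abs, sq_abs]
        have h1 := (hx i).1; have h2 := (hx i).2
        have h3 := (hy i).1; have h4 := (hy i).2
        nlinarith
    _ = d * l^2 := by simp [Finset.sum_const, Finset.card_univ, nsmul_eq_mul]

set_option maxHeartbeats 1000000 in
/-- On the cube `Q = [0,l]^d`, if `Q' ⊆ Q` has measure at least `(p/2) l^d`, then there is a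
constant `C = C(l,p,d)` such that for every `u ∈ H¹(Q)`:
`∫_Q |u|² ≤ C (∫_{Q'} |u|² + ∫_Q |∇u|²)`. -/
theorem cube_control_by_subset
    (d : ℕ) (hd : 0 < d) (l : ℝ) (hl : 0 < l) (p : ℝ) (hp : p ∈ Ioc (0 : ℝ) 1) :
    ∃ C : ℝ, 0 < C ∧
      ∀ (Q Q' : Set (EuclideanSpace ℝ (Fin d))),
        Q = {x | ∀ i, x i ∈ Icc (0 : ℝ) l} →
        Q' ⊆ Q → MeasurableSet Q' →
        ENNReal.ofReal (p / 2 * l ^ d) ≤ volume Q' →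
        ∀ u : EuclideanSpace ℝ (Fin d) → ℝ, ContDiff ℝ 1 u →
          (∫ x in Q, (u x) ^ 2) ≤
            C * ((∫ x in Q', (u x) ^ 2) + ∫ x in Q, ‖fderiv ℝ u x‖ ^ 2) := by
  obtain ⟨hp0, hp1⟩ := hp
  refine ⟨(4/p) * (1 + 2^(d+1) * d * l^2), by positivity, ?_⟩
  set C : ℝ := (4/p) * (1 + 2^(d+1) * d * l^2) with hC
  rintro Q Q' rfl hQ' hQ'm hQ'vol u hu
  set K := {x : EuclideanSpace ℝ (Fin d) | ∀ i, x i ∈ Icc (0:ℝ) l} with hKdef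
  have hK : IsCompact K := cube_compact hl.le
  have hKcvx : Convex ℝ K := cube_convex
  have hKm : MeasurableSet K := (cube_closed l).measurableSet
  have hKvol : volume K = ENNReal.ofReal (l^d) := cube_volume hl.le
  have hKfin : volume K < ⊤ := by rw [hKvol]; exact ENNReal.ofReal_lt_top
  have hQ'fin : volume Q' < ⊤ := lt_of_le_of_lt (measure_mono hQ') hKfin
  set V : ℝ := (volume K).toReal with hV
  have hVval : V = l^d := by rw [hV, hKvol, ENNReal.toReal_ofReal (by positivity)]
  set V' : ℝ := (volume Q').toReal with hV'
  have hm : p/2 * l^d ≤ V' := by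
    have h := ENNReal.toReal_mono hQ'fin.ne hQ'vol
    rwa [ENNReal.toReal_ofReal (by positivity)] at h
  have hmpos : (0:ℝ) < p/2 * l^d := by positivity
  have hV'pos : 0 < V' := lt_of_lt_of_le hmpos hm
  have huc : Continuous u := hu.continuous
  set g : EuclideanSpace ℝ (Fin d) → ℝ := fun z => ‖fderiv ℝ u z‖^2 with hg
  have hgc : Continuous g := (hu.continuous_fderiv one_ne_zero).norm.pow 2
  have hgnn : ∀ z, 0 ≤ g z := fun z => sq_nonneg _
  set B : ℝ := ∫ z in K, g z with hB
  have hBnn : 0 ≤ B := setIntegral_nonneg hKm fun z _ => hgnn z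
  set A : ℝ := ∫ x in Q', u x ^ 2 with hA
  have hAnn : 0 ≤ A := setIntegral_nonneg hQ'm fun z _ => sq_nonneg _
  set I : ℝ := ∫ x in K, u x ^ 2 with hI
  have hInn : 0 ≤ I := setIntegral_nonneg hKm fun z _ => sq_nonneg _
  -- the parametric integrals
  set G1 : EuclideanSpace ℝ (Fin d) × EuclideanSpace ℝ (Fin d) → ℝ :=
    fun q => ∫ t in (0:ℝ)..(1/2), g ((1-t) • q.2 + t • q.1) with hG1
  set Gf : EuclideanSpace ℝ (Fin d) × EuclideanSpace ℝ (Fin d) → ℝ :=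
    fun q => ∫ t in (0:ℝ)..1, g ((1-t) • q.2 + t • q.1) with hGf
  have hptc : Continuous (Function.uncurry fun (q : EuclideanSpace ℝ (Fin d) × EuclideanSpace ℝ (Fin d)) (t : ℝ) => g ((1-t) • q.2 + t • q.1)) := by
    apply hgc.comp
    exact ((continuous_const.sub continuous_snd).smul (continuous_snd.comp continuous_fst)).add
      (continuous_snd.smul (continuous_fst.comp continuous_fst))
  have hG1c : Continuous G1 :=
    intervalIntegral.continuous_parametric_intervalIntegral_of_continuous' hptc 0 (1/2)
  have hGfc : Continuous Gf :=
    intervalIntegral.continuous_parametric_intervalIntegral_of_continuous' hptc 0 1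
  have hGfnn : ∀ q, 0 ≤ Gf q := fun q =>
    intervalIntegral.integral_nonneg (by norm_num) (fun t _ => hgnn _)
  have hsplit : ∀ x y, Gf (x, y) = G1 (x, y) + G1 (y, x) := by
    intro x y
    have hcnt : Continuous fun t : ℝ => g ((1-t) • y + t • x) := by
      apply hgc.comp
      exact ((continuous_const.sub continuous_id).smul continuous_const).add
        (continuous_id.smul continuous_const)
    have hadd := intervalIntegral.integral_add_adjacent_intervals
      (hcnt.intervalIntegrable (μ := volume) 0 (1/2)) (hcnt.intervalIntegrable (μ := volume) (1/2) 1)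
    have h2 : (∫ t in (1/2:ℝ)..1, g ((1-t) • y + t • x)) = G1 (y, x) := by
      have e := intervalIntegral.integral_comp_sub_left (a := (1/2:ℝ)) (b := 1)
        (fun s => g (s • y + (1-s) • x)) 1
      simp only [sub_sub_cancel] at e
      norm_num at e
      rw [e]
      simp only [hG1]
      congr 1
      ext s
      rw [add_comm]
    calc Gf (x, y) = (∫ t in (0:ℝ)..(1/2), g ((1-t) • y + t • x))
          + ∫ t in (1/2:ℝ)..1, g ((1-t) • y + t • x) := hadd.symm
      _ = G1 (x, y) + G1 (y, x) := by rw [h2]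
  -- Fubini helpers
  have hIntKt : ∀ (x : EuclideanSpace ℝ (Fin d)),
      Integrable (Function.uncurry fun (y : EuclideanSpace ℝ (Fin d)) (t : ℝ) => g ((1-t) • y + t • x))
        ((volume.restrict K).prod (volume.restrict (Ioc (0:ℝ) (1/2)))) := by
    intro x
    rw [Measure.prod_restrict, ← Measure.volume_eq_prod]
    have hcnt : Continuous (Function.uncurry fun (y : EuclideanSpace ℝ (Fin d)) (t : ℝ) => g ((1-t) • y + t • x)) := by
      apply hgc.comp
      exact ((continuous_const.sub continuous_snd).smul continuous_fst).add
        (continuous_snd.smul continuous_const)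
    exact (hcnt.continuousOn.integrableOn_compact (hK.prod isCompact_Icc)).mono_set
      (Set.prod_mono subset_rfl Ioc_subset_Icc_self)
  have hIntKK : ∀ (F : EuclideanSpace ℝ (Fin d) × EuclideanSpace ℝ (Fin d) → ℝ), Continuous F →
      Integrable F ((volume.restrict K).prod (volume.restrict K)) := by
    intro F hF
    rw [Measure.prod_restrict, ← Measure.volume_eq_prod]
    exact hF.continuousOn.integrableOn_compact (hK.prod hK)
  -- claim A
  have claimA : ∀ x ∈ K, (∫ y in K, G1 (x, y)) ≤ 2^d * (1/2) * B := by
    intro x hx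
    have e0 : (∫ y in K, G1 (x, y))
        = ∫ y in K, ∫ t in Ioc (0:ℝ) (1/2), g ((1-t) • y + t • x) := by
      simp only [hG1]
      congr 1
      funext y
      rw [intervalIntegral.integral_of_le (by norm_num)]
    rw [e0, integral_integral_swap (hIntKt x)]
    have hb : ∀ t ∈ Ioc (0:ℝ) (1/2), (∫ y in K, g ((1-t) • y + t • x)) ≤ 2^d * B := by
      intro t ht
      have h1 : (1:ℝ)/2 ≤ 1 - t := by linarith [ht.2]
      have h2 : 1 - t ≤ 1 := by linarith [ht.1]
      have hsb := scale_bound g hgc hgnn hK hKcvx hKm hx h1 h2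
      have e : ∀ y : EuclideanSpace ℝ (Fin d), (1-t) • y + (1-(1-t)) • x = (1-t) • y + t • x := by
        intro y; rw [sub_sub_cancel]
      simp only [e] at hsb
      exact hsb
    calc (∫ t in Ioc (0:ℝ) (1/2), ∫ y in K, g ((1-t) • y + t • x))
        ≤ ∫ _t in Ioc (0:ℝ) (1/2), 2^d * B := by
          apply setIntegral_mono_on
          · exact (hIntKt x).integral_prod_right
          · exact integrableOn_const (by rw [Real.volume_Ioc]; exact ENNReal.ofReal_ne_top)
          · exact measurableSet_Ioc
          · exact hb
      _ = 2^d * (1/2) * B := by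
          rw [setIntegral_const, measureReal_def, Real.volume_Ioc, smul_eq_mul,
            ENNReal.toReal_ofReal (by norm_num)]
          ring
  -- claim B (symmetry)
  have claimB : (∫ x in K, ∫ y in K, G1 (y, x)) = ∫ x in K, ∫ y in K, G1 (x, y) :=
    integral_integral_swap (f := fun x y => G1 (y, x))
      (hIntKK (fun q => G1 q.swap) (hG1c.comp continuous_swap))
  -- the double integral S
  set H : EuclideanSpace ℝ (Fin d) → ℝ := fun x => ∫ y in K, Gf (x, y) with hH
  have hHint : IntegrableOn H K := (hIntKK Gf hGfc).integral_prod_left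
  have hS1int : IntegrableOn (fun x => ∫ y in K, G1 (x, y)) K :=
    (hIntKK G1 hG1c).integral_prod_left
  have hS2int : IntegrableOn (fun x => ∫ y in K, G1 (y, x)) K :=
    (hIntKK (fun q => G1 q.swap) (hG1c.comp continuous_swap)).integral_prod_left
  have hSbound : (∫ x in K, H x) ≤ 2^d * V * B := by
    have e1 : ∀ x, H x = (∫ y in K, G1 (x, y)) + ∫ y in K, G1 (y, x) := by
      intro x
      have i1 : IntegrableOn (fun y => G1 (x, y)) K :=
        ((hG1c.comp (Continuous.prodMk_right x)).continuousOn).integrableOn_compact hK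
      have i2 : IntegrableOn (fun y => G1 (y, x)) K :=
        ((hG1c.comp (continuous_id.prodMk continuous_const)).continuousOn).integrableOn_compact hK
      rw [hH]
      simp only [hsplit]
      exact integral_add i1 i2
    have e2 : (∫ x in K, H x)
        = (∫ x in K, ∫ y in K, G1 (x, y)) + ∫ x in K, ∫ y in K, G1 (y, x) := by
      simp only [e1]
      exact integral_add hS1int hS2int
    rw [e2, claimB]
    have e3 : (∫ x in K, ∫ y in K, G1 (x, y)) ≤ V * (2^d * (1/2) * B) := by
      calc (∫ x in K, ∫ y in K, G1 (x, y)) ≤ ∫ _x in K, 2^d * (1/2) * B := by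
            apply setIntegral_mono_on hS1int
              (integrableOn_const hKfin.ne) hKm claimA
        _ = V * (2^d * (1/2) * B) := by rw [setIntegral_const, measureReal_def, smul_eq_mul, ← hV]
    nlinarith [e3]
  -- pointwise-in-x estimate
  have perx : ∀ x ∈ K, V' * u x ^ 2 ≤ 2 * A + 2 * ((d:ℝ) * l^2) * H x := by
    intro x hx
    have step1 : V' * u x ^ 2 = ∫ _y in Q', u x ^ 2 := by
      rw [setIntegral_const, measureReal_def, smul_eq_mul, ← hV']
    have int_uy : IntegrableOn (fun y => u y ^ 2) Q' :=
      (((huc.pow 2).continuousOn).integrableOn_compact hK).mono_set hQ'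
    have int_dK : IntegrableOn (fun y => (u x - u y)^2) K :=
      (((continuous_const.sub huc).pow 2).continuousOn).integrableOn_compact hK
    have int_dQ : IntegrableOn (fun y => (u x - u y)^2) Q' := int_dK.mono_set hQ'
    have int_Gfx : IntegrableOn (fun y => Gf (x, y)) K :=
      ((hGfc.comp (Continuous.prodMk_right x)).continuousOn).integrableOn_compact hK
    have s2 : (∫ _y in Q', u x ^ 2) ≤ ∫ y in Q', (2 * u y ^ 2 + 2 * (u x - u y)^2) := by
      apply setIntegral_mono_on
      · exact integrableOn_const hQ'fin.ne
      · exact (int_uy.const_mul 2).add (int_dQ.const_mul 2)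
      · exact hQ'm
      · intro y _
        nlinarith [sq_nonneg (u x - 2 * u y)]
    have s3 : (∫ y in Q', (2 * u y ^ 2 + 2 * (u x - u y)^2))
        = 2 * A + 2 * ∫ y in Q', (u x - u y)^2 := by
      rw [integral_add (int_uy.const_mul 2) (int_dQ.const_mul 2),
        integral_const_mul, integral_const_mul, hA]
    have s4 : (∫ y in Q', (u x - u y)^2) ≤ ∫ y in K, (u x - u y)^2 :=
      setIntegral_mono_set int_dK (Filter.Eventually.of_forall fun y => sq_nonneg _)
        (Filter.Eventually.of_forall hQ')
    have s5 : (∫ y in K, (u x - u y)^2) ≤ ∫ y in K, ((d:ℝ) * l^2) * Gf (x, y) := by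
      apply setIntegral_mono_on int_dK (int_Gfx.const_mul _) hKm
      intro y hy
      calc (u x - u y)^2
          ≤ ‖x - y‖^2 * ∫ t in (0:ℝ)..1, ‖fderiv ℝ u ((1-t) • y + t • x)‖^2 :=
            ftc_sq u hu x y
        _ ≤ ((d:ℝ) * l^2) * Gf (x, y) := by
            have e : (∫ t in (0:ℝ)..1, ‖fderiv ℝ u ((1-t) • y + t • x)‖^2) = Gf (x, y) := rfl
            rw [e]
            exact mul_le_mul_of_nonneg_right (cube_dist hl.le hx hy) (hGfnn _)
    have s6 : (∫ y in K, ((d:ℝ) * l^2) * Gf (x, y)) = ((d:ℝ) * l^2) * H x := by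
      rw [integral_const_mul, hH]
    calc V' * u x ^ 2 = ∫ _y in Q', u x ^ 2 := step1
      _ ≤ ∫ y in Q', (2 * u y ^ 2 + 2 * (u x - u y)^2) := s2
      _ = 2 * A + 2 * ∫ y in Q', (u x - u y)^2 := s3
      _ ≤ 2 * A + 2 * ((d:ℝ) * l^2) * H x := by
          have := (s4.trans s5).trans_eq s6
          linarith
  -- main integral inequality
  have main1 : V' * I ≤ ∫ x in K, (2 * A + 2 * ((d:ℝ) * l^2) * H x) := by
    have e : V' * I = ∫ x in K, V' * u x ^ 2 := by
      rw [hI, integral_const_mul]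
    rw [e]
    apply setIntegral_mono_on
    · exact (((huc.pow 2).continuousOn).integrableOn_compact hK).const_mul V'
    · exact (integrableOn_const hKfin.ne).add (hHint.const_mul _)
    · exact hKm
    · exact perx
  have main2 : (∫ x in K, (2 * A + 2 * ((d:ℝ) * l^2) * H x))
      = 2 * A * V + 2 * ((d:ℝ) * l^2) * ∫ x in K, H x := by
    rw [integral_add (integrableOn_const (C := 2 * A) hKfin.ne) (hHint.const_mul _),
      setIntegral_const, measureReal_def, integral_const_mul, smul_eq_mul, ← hV]
    ring
  have main3 : V' * I ≤ 2 * A * V + 2 * ((d:ℝ) * l^2) * (2^d * V * B) := by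
    rw [main2] at main1
    have hHKnn : (0:ℝ) ≤ (d:ℝ) * l^2 := by positivity
    nlinarith [hSbound]
  -- final arithmetic
  have hld : (0:ℝ) < l^d := by positivity
  set W : ℝ := 2^(d+1) * (d:ℝ) * l^2 with hW
  have hWnn : (0:ℝ) ≤ W := by positivity
  have hmC : (p/2 * l^d) * C = 2 * l^d * (1 + W) := by
    rw [hC, hW]
    field_simp
    ring
  have hchain : (p/2 * l^d) * I ≤ 2 * l^d * A + W * l^d * B := by
    have h1 : (p/2 * l^d) * I ≤ V' * I := mul_le_mul_of_nonneg_right hm hInn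
    have h2 : 2 * A * V + 2 * ((d:ℝ) * l^2) * (2^d * V * B) = 2 * l^d * A + W * l^d * B := by
      rw [hVval, hW]; ring
    linarith [main3]
  have hfinal : (p/2 * l^d) * I ≤ (p/2 * l^d) * (C * (A + B)) := by
    rw [← mul_assoc, hmC]
    nlinarith [mul_nonneg (mul_nonneg hld.le hWnn) hAnn,
      mul_nonneg (mul_nonneg hld.le hWnn) hBnn, mul_nonneg hld.le hBnn]
  have := le_of_mul_le_mul_left (by linarith [hfinal] : (p/2 * l^d) * I ≤ (p/2 * l^d) * (C * (A+B))) hmpos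
  calc (∫ x in K, u x ^ 2) = I := rfl
    _ ≤ C * (A + B) := this
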